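/- arXiv:2112.03143 — 4 statements merged into one kernel-verified Lean document; each statement's English description precedes it below -/
import Mathlib

section
/- For positive, non-identical masses z, the sum over k of the entropy gradients ∑_k (1/(∑_j z_j)^2)∑_i z_i log(z_i/z_k) is strictly positive; hence a full (unclipped) gradient descent step on entropy strictly decreases the total mass ∑_j z_j. -/
/-- For positive non-identical masses, the sum of entropy gradients is
strictly positive; hence an unclipped gradient descent step strictly decreases the
total mass. -/
theorem entropy_grad_sum_pos (s : ℕ) (z : Fin s → ℝ) (hz : ∀ i, 0 < z i)
    (hne : ∃ i j, z i ≠ z j) (η : ℝ) (hη : 0 < η)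
    (hpos : ∀ k, 0 < z k - η * ((1 / (∑ j, z j) ^ 2) * ∑ i, z i * Real.log (z i / z k))) :
    (0 < ∑ k, (1 / (∑ j, z j) ^ 2) * ∑ i, z i * Real.log (z i / z k)) ∧
    (∑ k, (z k - η * ((1 / (∑ j, z j) ^ 2) * ∑ i, z i * Real.log (z i / z k))) <
      ∑ j, z j) := by
  obtain ⟨i₀, j₀, hij⟩ := hne
  have hSz : 0 < ∑ j, z j := Finset.sum_pos (fun i _ => hz i) ⟨i₀, Finset.mem_univ i₀⟩
  set f : Fin s → ℝ := fun i => Real.log (z i) with hf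
  have hlog : ∀ i k : Fin s, Real.log (z i / z k) = f i - f k := fun i k =>
    Real.log_div (hz i).ne' (hz k).ne'
  -- nonnegativity of cross terms
  have hterm : ∀ i k : Fin s, 0 ≤ (z i - z k) * (f i - f k) := by
    intro i k
    rcases le_total (z i) (z k) with h | h
    · have := mul_nonneg (sub_nonneg.2 h) (sub_nonneg.2 (Real.log_le_log (hz i) h))
      nlinarith [this]
    · exact mul_nonneg (sub_nonneg.2 h) (sub_nonneg.2 (Real.log_le_log (hz k) h))
  have htermpos : 0 < (z i₀ - z j₀) * (f i₀ - f j₀) := by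
    rcases hij.lt_or_gt with h | h
    · exact mul_pos_of_neg_of_neg (sub_neg.2 h) (sub_neg.2 (Real.log_lt_log (hz i₀) h))
    · exact mul_pos (sub_pos.2 h) (sub_pos.2 (Real.log_lt_log (hz j₀) h))
  have hT : 0 < ∑ k, ∑ i, (z i - z k) * (f i - f k) := by
    apply Finset.sum_pos'
    · intro k _
      exact Finset.sum_nonneg fun i _ => hterm i k
    · refine ⟨j₀, Finset.mem_univ j₀, Finset.sum_pos' (fun i _ => hterm i j₀)
        ⟨i₀, Finset.mem_univ i₀, htermpos⟩⟩
  have h2S : ∑ k, ∑ i, (z i - z k) * (f i - f k)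
      = 2 * ∑ k, ∑ i, z i * Real.log (z i / z k) := by
    have hswap : ∑ k, ∑ i, z k * (f k - f i) = ∑ k, ∑ i, z i * (f i - f k) :=
      Finset.sum_comm
    calc ∑ k, ∑ i, (z i - z k) * (f i - f k)
        = ∑ k, ∑ i, (z i * (f i - f k) + z k * (f k - f i)) := by
          apply Finset.sum_congr rfl; intro k _
          apply Finset.sum_congr rfl; intro i _
          ring
      _ = (∑ k, ∑ i, z i * (f i - f k)) + ∑ k, ∑ i, z k * (f k - f i) := by
          rw [← Finset.sum_add_distrib]
          exact Finset.sum_congr rfl fun k _ => Finset.sum_add_distrib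
      _ = 2 * ∑ k, ∑ i, z i * (f i - f k) := by rw [hswap]; ring
      _ = 2 * ∑ k, ∑ i, z i * Real.log (z i / z k) := by
          simp only [hlog]
  have hS : 0 < ∑ k, ∑ i, z i * Real.log (z i / z k) := by
    nlinarith [hT, h2S]
  have hc : 0 < 1 / (∑ j, z j) ^ 2 := by positivity
  have hfirst : 0 < ∑ k, (1 / (∑ j, z j) ^ 2) * ∑ i, z i * Real.log (z i / z k) := by
    rw [← Finset.mul_sum]
    exact mul_pos hc hS
  refine ⟨hfirst, ?_⟩
  have : ∑ k, (z k - η * ((1 / (∑ j, z j) ^ 2) * ∑ i, z i * Real.log (z i / z k)))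
      = (∑ k, z k) - η * ∑ k, (1 / (∑ j, z j) ^ 2) * ∑ i, z i * Real.log (z i / z k) := by
    rw [Finset.sum_sub_distrib, ← Finset.mul_sum]
  rw [this]
  have := mul_pos hη hfirst
  linarith
end

section
/- Let q, q̃ ∈ [0,1]^s be sorted in descending order with q̃ − q consisting of a block of nonnegative values followed by a block of negative values and summing to zero. Then for any integer m ≥ 2, ∑_i q̃_i^{m−1}(q̃_i − q_i) > 0, provided q̃ − q is not identically zero. -/
/-- For q, q̃ ∈ [0,1]^s sorted descending, with q̃ − q a block of
nonnegative values followed by a block of negative values summing to zero and not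
identically zero, then for m ≥ 2, ∑_i q̃_i^{m−1}(q̃_i − q_i) > 0. -/
theorem tilted_power_dot_pos (s : ℕ) (q qt : Fin s → ℝ)
    (hq : ∀ i, 0 ≤ q i ∧ q i ≤ 1) (hqt : ∀ i, 0 ≤ qt i ∧ qt i ≤ 1)
    (hqdesc : ∀ i j : Fin s, i ≤ j → q j ≤ q i)
    (hqtdesc : ∀ i j : Fin s, i ≤ j → qt j ≤ qt i)
    (hsum : ∑ i, (qt i - q i) = 0)
    (l : ℕ) (hblock : (∀ i : Fin s, (i : ℕ) < l → 0 ≤ qt i - q i) ∧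
      (∀ i : Fin s, l ≤ (i : ℕ) → qt i - q i < 0))
    (hne : ∃ i, qt i - q i ≠ 0)
    (m : ℕ) (hm : 2 ≤ m) :
    0 < ∑ i, qt i ^ (m - 1) * (qt i - q i) := by
  obtain ⟨hpos, hneg⟩ := hblock
  obtain ⟨k, hk⟩ := hne
  -- there is a strictly positive entry
  have hex_pos : ∃ i : Fin s, 0 < qt i - q i := by
    by_contra h
    push_neg at h
    have hk' : qt k - q k < 0 := lt_of_le_of_ne (h k) hk
    have : ∑ i, (qt i - q i) < 0 :=
      Finset.sum_neg' (fun i _ => h i) ⟨k, Finset.mem_univ k, hk'⟩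
    linarith
  obtain ⟨i0, hi0⟩ := hex_pos
  -- there is a negative entry
  have hex_neg : ∃ j : Fin s, qt j - q j < 0 := by
    by_contra h
    push_neg at h
    have : 0 < ∑ i, (qt i - q i) :=
      Finset.sum_pos' (fun i _ => h i) ⟨i0, Finset.mem_univ i0, hi0⟩
    linarith
  obtain ⟨j0, hj0⟩ := hex_neg
  have hi0l : (i0 : ℕ) < l := by
    by_contra h
    push_neg at h
    exact absurd (hneg i0 h) (by linarith)
  have hls : l < s := lt_of_le_of_lt (by
      by_contra h
      push_neg at h
      exact absurd (hpos j0 h) (by linarith)) j0.isLt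
  set L : Fin s := ⟨l, hls⟩ with hL
  have hcL : qt L < qt i0 := by
    have h1 : qt L < q L := by
      have := hneg L (le_refl l); linarith
    have h2 : q L ≤ q i0 := hqdesc i0 L (by simp [hL, Fin.le_def]; omega)
    linarith
  have hc0 : (0:ℝ) ≤ qt L := (hqt L).1
  have hm1 : m - 1 ≠ 0 := by omega
  have key : ∑ i, qt L ^ (m - 1) * (qt i - q i) < ∑ i, qt i ^ (m - 1) * (qt i - q i) := by
    apply Finset.sum_lt_sum
    · intro i _
      rcases lt_or_ge (i : ℕ) l with h | h
      · have hd : 0 ≤ qt i - q i := hpos i h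
        have hqi : qt L ≤ qt i := hqtdesc i L (by simp [hL, Fin.le_def]; omega)
        exact mul_le_mul_of_nonneg_right (pow_le_pow_left₀ hc0 hqi _) hd
      · have hd : qt i - q i ≤ 0 := le_of_lt (hneg i h)
        have hqi : qt i ≤ qt L := hqtdesc L i (by simp [hL, Fin.le_def]; omega)
        exact mul_le_mul_of_nonpos_right (pow_le_pow_left₀ (hqt i).1 hqi _) hd
    · refine ⟨i0, Finset.mem_univ i0, ?_⟩
      exact mul_lt_mul_of_pos_right (pow_lt_pow_left₀ hcL hc0 hm1) hi0
  calc (0:ℝ) = ∑ i, qt L ^ (m - 1) * (qt i - q i) := by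
        rw [← Finset.mul_sum, hsum, mul_zero]
    _ < _ := key
end

section
/- For positive masses z sorted ascending with z_0 < z_1 (smallest and second-smallest distinct nonzero masses), one gradient descent step of entropy minimization strictly increases the ratio z_1/z_0: (z_1 − η·g_1)/(z_0 − η·g_0) > z_1/z_0, where g_k = ∑_j z_j log(z_j/z_k), provided both numerator and denominator remain positive. -/
/-!
The gradient `g_k = ∑ j, z_j log (z_j / z_k)` is strictly decreasing in `z_k`, so `g_1 < g_0`,
and `g_0 ≥ 0` because `z_0` is the smallest mass. Cross-multiplied, the claim is
`z_0 g_1 < z_1 g_0`, which follows from these two facts and `z_0 < z_1`.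
-/

open Real Finset

section EntropyGradient

variable {ι : Type*} [Fintype ι] {z : ι → ℝ}

theorem sum_mul_log_div_lt_sum_mul_log_div [Nonempty ι] (hz : ∀ j, 0 < z j) {a b : ℝ}
    (ha : 0 < a) (hab : a < b) :
    ∑ j, z j * log (z j / b) < ∑ j, z j * log (z j / a) :=
  sum_lt_sum_of_nonempty univ_nonempty fun j _ =>
    mul_lt_mul_of_pos_left (log_lt_log (div_pos (hz j) (ha.trans hab))
      (div_lt_div_of_pos_left (hz j) ha hab)) (hz j)

theorem sum_mul_log_div_nonneg {a : ℝ} (ha : 0 < a) (hle : ∀ j, a ≤ z j) :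
    0 ≤ ∑ j, z j * log (z j / a) :=
  sum_nonneg fun j _ =>
    mul_nonneg (ha.le.trans (hle j)) (log_nonneg ((one_le_div ha).mpr (hle j)))

end EntropyGradient

theorem div_lt_sub_mul_div_sub_mul {a b η g g' : ℝ} (ha : 0 < a) (hab : a < b) (hη : 0 < η)
    (hg : 0 ≤ g) (hg' : g' < g) (hden : 0 < a - η * g) :
    b / a < (b - η * g') / (a - η * g) := by
  have hkey : a * g' < b * g := by
    rcases le_or_gt 0 g' with hg'_nonneg | hg'_neg
    · calc a * g' ≤ b * g' := mul_le_mul_of_nonneg_right hab.le hg'_nonneg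
        _ < b * g := mul_lt_mul_of_pos_left hg' (ha.trans hab)
    · calc a * g' < 0 := mul_neg_of_pos_of_neg ha hg'_neg
        _ ≤ b * g := mul_nonneg (ha.trans hab).le hg
  rw [div_lt_div_iff₀ ha hden]
  linarith [mul_lt_mul_of_pos_left hkey hη]

/-- For positive masses z sorted ascending with the smallest and
second-smallest distinct, one entropy gradient descent step strictly increases the
ratio of the second-smallest to the smallest mass, where g_k = ∑_j z_j log(z_j/z_k). -/
theorem ratio_increases (s : ℕ) (hs : 2 ≤ s) (z : Fin s → ℝ)
    (hz : ∀ i, 0 < z i) (hmono : Monotone z)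
    (h01 : z ⟨0, by omega⟩ < z ⟨1, by omega⟩) (η : ℝ) (hη : 0 < η)
    (hd0 : 0 < z ⟨0, by omega⟩ - η * ∑ j, z j * Real.log (z j / z ⟨0, by omega⟩)) :
    z ⟨1, by omega⟩ / z ⟨0, by omega⟩ <
      (z ⟨1, by omega⟩ - η * ∑ j, z j * Real.log (z j / z ⟨1, by omega⟩)) /
      (z ⟨0, by omega⟩ - η * ∑ j, z j * Real.log (z j / z ⟨0, by omega⟩)) := by
  have : Nonempty (Fin s) := ⟨⟨0, by omega⟩⟩
  have hmin : ∀ j, z ⟨0, by omega⟩ ≤ z j := fun j => hmono (Nat.zero_le j.val)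
  exact div_lt_sub_mul_div_sub_mul (hz _) h01 hη (sum_mul_log_div_nonneg (hz _) hmin)
    (sum_mul_log_div_lt_sum_mul_log_div hz (hz _) h01) hd0
end

section
/- For positive non-uniform masses z with smallest mass at index i, the entropy-gradient-induced decrease in the probability of state i in one gradient step is strictly greater than (η/c)·(1 − s·p_i)·(∑_k p_k log(z_k/z_i)), where p_k = z_k/∑_l z_l, and this lower bound is strictly positive. -/
/-- For positive non-uniform masses z with unique smallest mass at
index i, the decrease in the probability of state i after one entropy gradient step
is strictly greater than (η/c)·(1 − s·p_i)·(∑_k p_k log(z_k/z_i)), and this lower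
bound is strictly positive. -/
theorem prob_decrease_lower_bound (s : ℕ) (hs : 2 ≤ s) (z zt : Fin s → ℝ)
    (hz : ∀ j, 0 < z j) (i : Fin s) (hi : ∀ j, j ≠ i → z i < z j)
    (η : ℝ) (hη : 0 < η)
    (hzt : ∀ k, zt k = z k - (η / (∑ l, z l) ^ 2) * ∑ j, z j * Real.log (z j / z k))
    (hztpos : ∀ k, 0 < zt k) :
    (η / ((∑ j, z j) * ∑ j, zt j)) * (1 - s * (z i / ∑ l, z l)) *
        (∑ k, (z k / ∑ l, z l) * Real.log (z k / z i)) <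
      z i / ∑ l, z l - zt i / ∑ j, zt j ∧
    0 < (η / ((∑ j, z j) * ∑ j, zt j)) * (1 - s * (z i / ∑ l, z l)) *
        (∑ k, (z k / ∑ l, z l) * Real.log (z k / z i)) := by
  have hzne : ∀ j, z j ≠ 0 := fun j => (hz j).ne'
  set S := ∑ l, z l with hSdef
  have hS : 0 < S := Finset.sum_pos (fun j _ => hz j) ⟨i, Finset.mem_univ i⟩
  set A := ∑ j, z j * Real.log (z j) with hAdef
  set Lg := ∑ j, Real.log (z j) with hLdef
  have hlogdiv : ∀ j k : Fin s, Real.log (z j / z k)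
      = Real.log (z j) - Real.log (z k) := fun j k => Real.log_div (hzne j) (hzne k)
  have hsum : ∀ k, (∑ j, z j * Real.log (z j / z k)) = A - S * Real.log (z k) := by
    intro k
    simp only [hlogdiv, mul_sub]
    rw [Finset.sum_sub_distrib, ← Finset.sum_mul]
  have hzt' : ∀ k, zt k = z k - (η / S ^ 2) * (A - S * Real.log (z k)) := by
    intro k; rw [hzt k, hsum k]
  set T := ∑ j, zt j with hTdef
  have hTpos : 0 < T := Finset.sum_pos (fun j _ => hztpos j) ⟨i, Finset.mem_univ i⟩
  have hcard : (Finset.univ : Finset (Fin s)).card = s := by simp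
  have hTeq : T = S - (η / S ^ 2) * (s * A - S * Lg) := by
    rw [hTdef]
    simp only [hzt']
    rw [Finset.sum_sub_distrib, ← Finset.mul_sum]
    congr 2
    rw [Finset.sum_sub_distrib, ← Finset.mul_sum, Finset.sum_const, hcard]

    ring
  obtain ⟨j, hj⟩ : ∃ j : Fin s, j ≠ i :=
    Fintype.exists_ne_of_one_lt_card (by simp; omega) i
  have hlognn : ∀ k, 0 ≤ Real.log (z k / z i) := by
    intro k
    rcases eq_or_ne k i with rfl | h
    · simp [div_self (hzne k)]
    · exact Real.log_nonneg ((one_le_div (hz i)).mpr (hi k h).le)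
  have hlogj : 0 < Real.log (z j / z i) :=
    Real.log_pos ((one_lt_div (hz i)).mpr (hi j hj))
  have hBpos : 0 < ∑ k, z k * Real.log (z k / z i) :=
    Finset.sum_pos' (fun k _ => mul_nonneg (hz k).le (hlognn k))
      ⟨j, Finset.mem_univ j, mul_pos (hz j) hlogj⟩
  have hCpos : 0 < ∑ k, Real.log (z k / z i) :=
    Finset.sum_pos' (fun k _ => hlognn k) ⟨j, Finset.mem_univ j, hlogj⟩
  have hBeq : (∑ k, z k * Real.log (z k / z i)) = A - S * Real.log (z i) := hsum i
  have hCeq : (∑ k, Real.log (z k / z i)) = Lg - s * Real.log (z i) := by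
    simp only [hlogdiv]
    rw [Finset.sum_sub_distrib, Finset.sum_const, hcard]
    ring
  have hSsz : (s : ℝ) * z i < S := by
    have h1 : (∑ _k : Fin s, z i) < ∑ k, z k :=
      Finset.sum_lt_sum
        (fun k _ => by rcases eq_or_ne k i with rfl | h; exacts [le_rfl, (hi k h).le])
        ⟨j, Finset.mem_univ j, hi j hj⟩
    simpa [Finset.sum_const, hcard, nsmul_eq_mul] using h1
  have hfrac : 0 < 1 - (s : ℝ) * (z i / S) := by
    have : (s : ℝ) * (z i / S) < 1 := by
      rw [mul_div_assoc'] at *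
      exact (div_lt_one hS).mpr hSsz
    linarith
  have hgsum : (∑ k, (z k / S) * Real.log (z k / z i))
      = (∑ k, z k * Real.log (z k / z i)) / S := by
    rw [Finset.sum_div]
    exact Finset.sum_congr rfl fun k _ => by ring
  have hboundpos : 0 < (η / (S * T)) * (1 - s * (z i / S)) *
      (∑ k, (z k / S) * Real.log (z k / z i)) := by
    apply mul_pos (mul_pos (div_pos hη (mul_pos hS hTpos)) hfrac)
    rw [hgsum]
    exact div_pos hBpos hS
  refine ⟨?_, hboundpos⟩
  have hT0 : S - (η / S ^ 2) * (s * A - S * Lg) ≠ 0 := by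
    rw [← hTeq]; exact hTpos.ne'
  have hnum : z i * T - S * zt i = η / S ^ 2 *
      ((S - s * z i) * (A - S * Real.log (z i)) +
        z i * S * (Lg - s * Real.log (z i))) := by
    rw [hzt' i, hTeq]; ring
  have key : z i / S - zt i / T - (η / (S * T)) * (1 - s * (z i / S)) *
      (∑ k, (z k / S) * Real.log (z k / z i))
      = η * z i * (Lg - s * Real.log (z i)) / (S ^ 2 * T) := by
    rw [hgsum, hBeq, div_sub_div _ _ hS.ne' hTpos.ne', hnum]
    field_simp
    ring
  have hextra : 0 < η * z i * (Lg - s * Real.log (z i)) / (S ^ 2 * T) := by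
    apply div_pos
    · exact mul_pos (mul_pos hη (hz i)) (hCeq ▸ hCpos)
    · exact mul_pos (pow_pos hS 2) hTpos
  linarith [key, hextra]
end
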